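/- Under randomization, monotonicity, principal ignorability, and the positivity condition, for every z ∈ {1,...,J} and every g ∈ {J−z+1,...,J}: E[Y_z·1(G=g)] = E[(p_{J−g+1}(X) − p_{J−g}(X))·m_z(X)]. -/

import Mathlib

open MeasureTheory ProbabilityTheory

noncomputable section

namespace TruncationByDeath

variable {Ω : Type*} {𝒳 : Type*} [MeasurableSpace Ω] [MeasurableSpace 𝒳]

/-- The σ-algebra on `Ω` generated by the covariate map `X`. -/
def mX (X : Ω → 𝒳) : MeasurableSpace Ω := MeasurableSpace.comap X inferInstance

/-- Real-valued indicator of the event `{Z = z}`. -/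
def indic (Z : Ω → ℕ) (z : ℕ) : Ω → ℝ := fun ω => if Z ω = z then 1 else 0

/-- Observed survival status `S := ∑_z 1(Z=z) ⬝ S_z`. -/
def Sobs (J : ℕ) (Z : Ω → ℕ) (S : ℕ → Ω → ℝ) : Ω → ℝ :=
  fun ω => ∑ z ∈ Finset.Icc 1 J, indic Z z ω * S z ω

/-- Observed outcome `Y := ∑_z 1(Z=z) ⬝ Y_z`. -/
def Yobs (J : ℕ) (Z : Ω → ℕ) (Y : ℕ → Ω → ℝ) : Ω → ℝ :=
  fun ω => ∑ z ∈ Finset.Icc 1 J, indic Z z ω * Y z ω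

/-- Principal score `p_z(X) := E[S_z | σ(X)]`, with conventions `p_0 := 0` and `p_{J+1} := 1`. -/
def pscore (P : Measure Ω) (X : Ω → 𝒳) (S : ℕ → Ω → ℝ) (J : ℕ) (z : ℕ) : Ω → ℝ :=
  if z = 0 then fun _ => 0 else if z = J + 1 then fun _ => 1 else P[S z | mX X]

/-- Treatment probability `π_z := P(Z = z)`. -/
def piZ (P : Measure Ω) (Z : Ω → ℕ) (z : ℕ) : ℝ := (P {ω | Z ω = z}).toReal

/-- Principal stratum variable `G := ∑_{z=1}^J S_z`. -/
def Gsum (J : ℕ) (S : ℕ → Ω → ℝ) : Ω → ℝ := fun ω => ∑ z ∈ Finset.Icc 1 J, S z ω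

/-- Real-valued indicator of the event `{G = g}`. -/
def indG (J : ℕ) (S : ℕ → Ω → ℝ) (g : ℕ) : Ω → ℝ :=
  Set.indicator {ω | Gsum J S ω = (g : ℝ)} (fun _ => (1 : ℝ))

/-- Principal score of the stratum `g` : `e_g(X) := E[1(G=g) | σ(X)]`. -/
def eg (P : Measure Ω) (X : Ω → 𝒳) (J : ℕ) (S : ℕ → Ω → ℝ) (g : ℕ) : Ω → ℝ :=
  P[indG J S g | mX X]

/-- Basic setup: measurability, ranges, values and integrability of the primitives. -/
structure Setup (P : Measure Ω) (J : ℕ) (X : Ω → 𝒳) (Z : Ω → ℕ)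
    (S Y : ℕ → Ω → ℝ) : Prop where
  hJ : 2 ≤ J
  hX : Measurable X
  hZ : Measurable Z
  hZr : ∀ ω, Z ω ∈ Finset.Icc 1 J
  hSm : ∀ z, Measurable (S z)
  hS01 : ∀ z ω, S z ω = 0 ∨ S z ω = 1
  hYm : ∀ z, Measurable (Y z)
  hYint : ∀ z, Integrable (Y z) P

/-- Randomization : `Z` is independent of `(X, S_1,…,S_J, Y_1,…,Y_J)` and `π_z > 0` for all
`z ∈ {1,…,J}`. -/
def Randomization (P : Measure Ω) (J : ℕ) (X : Ω → 𝒳) (Z : Ω → ℕ)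
    (S Y : ℕ → Ω → ℝ) : Prop :=
  IndepFun Z (fun ω => (X ω, fun z => S z ω, fun z => Y z ω)) P ∧
    ∀ z ∈ Finset.Icc 1 J, 0 < piZ P Z z

/-- Monotonicity : `S_{z'} ≤ S_z` a.s. whenever `z' ≤ z`. -/
def Monotonicity (P : Measure Ω) (J : ℕ) (S : ℕ → Ω → ℝ) : Prop :=
  ∀ z ∈ Finset.Icc 1 J, ∀ z' ∈ Finset.Icc 1 J, z' ≤ z → ∀ᵐ ω ∂P, S z' ω ≤ S z ω

/-- Principal ignorability. -/
def PrincipalIgnorability (P : Measure Ω) (J : ℕ) (X : Ω → 𝒳)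
    (S Y : ℕ → Ω → ℝ) : Prop :=
  ∀ z ∈ Finset.Icc 1 J, ∀ g ∈ Finset.Icc (J - z + 1) J, ∀ g' ∈ Finset.Icc (J - z + 1) J,
    (fun ω => (P[fun ω' => Y z ω' * indG J S g ω' | mX X]) ω * eg P X J S g' ω)
      =ᵐ[P] fun ω => (P[fun ω' => Y z ω' * indG J S g' ω' | mX X]) ω * eg P X J S g ω

/-- Positivity : the principal scores are uniformly bounded away from zero. -/
def Positivity (P : Measure Ω) (J : ℕ) (X : Ω → 𝒳) (S : ℕ → Ω → ℝ) : Prop :=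
  ∃ c : ℝ, 0 < c ∧ ∀ z ∈ Finset.Icc 1 J, ∀ᵐ ω ∂P, c ≤ pscore P X S J z ω

end TruncationByDeath

/-!
The survival indicators are `0/1` and, by monotonicity, increasing in the treatment level, so
`S_k = 1(G ≥ J - k + 1)`. Hence `1(G = g) = S_{J-g+1} - S_{J-g}`, and `{S_z = 1}` is the disjoint
union of the strata `g ≥ J - z + 1`. Conditioning on `X`, the first identity gives
`e_g = p_{J-g+1} - p_{J-g}`, and randomization gives `E[Y_z S_z | X] = m_z p_z`. Principal
ignorability makes `E[Y_z 1(G=g) | X]` proportional to `e_g` across the strata composing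
`{S_z = 1}`; summing over them (and dividing by `p_z ≥ c > 0`) identifies the factor as `m_z`.
Integrating `E[Y_z 1(G=g) | X] = m_z e_g` gives the claim.
-/

open Finset

theorem sum_eq_card_filter_eq_one {ι : Type*} (t : Finset ι) {s : ι → ℝ}
    (hs : ∀ k, s k = 0 ∨ s k = 1) : ∑ k ∈ t, s k = #{k ∈ t | s k = 1} := by
  rw [← sum_boole]
  refine sum_congr rfl fun k _ => ?_
  rcases hs k with h | h <;> simp [h]

section MonotoneBinary

variable {J : ℕ} {s : ℕ → ℝ}

theorem eq_ite_card_filter_eq_one (hs : ∀ k, s k = 0 ∨ s k = 1)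
    (hmono : MonotoneOn s (Set.Iic (J + 1))) (h0 : s 0 = 0) (hJ : s (J + 1) = 1)
    {k : ℕ} (hk : k ≤ J + 1) :
    s k = if J + 1 ≤ k + #{j ∈ Icc 1 J | s j = 1} then 1 else 0 := by
  rcases hs k with hsk | hsk
  · have hsub : {j ∈ Icc 1 J | s j = 1} ⊆ Icc (k + 1) J := by
      intro j hj
      simp only [mem_filter, mem_Icc] at hj ⊢
      refine ⟨Nat.succ_le_of_lt (not_le.mp fun hjk => ?_), hj.1.2⟩
      have := hmono (by simp; omega) (by simpa using hk) hjk
      linarith [hj.2]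
    have hk' : k ≠ J + 1 := by rintro rfl; linarith
    have := card_le_card hsub
    simp only [Nat.card_Icc] at this
    rw [hsk, if_neg (by omega)]
  · have hk0 : k ≠ 0 := by rintro rfl; linarith
    have hsub : Icc k J ⊆ {j ∈ Icc 1 J | s j = 1} := by
      intro j hj
      simp only [mem_filter, mem_Icc] at hj ⊢
      refine ⟨⟨by omega, hj.2⟩, ?_⟩
      have := hmono (by simpa using hk) (by simp; omega) hj.1
      rcases hs j with h | h <;> [linarith; exact h]
    have := card_le_card hsub
    simp only [Nat.card_Icc] at this
    rw [hsk, if_pos (by omega)]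

theorem card_filter_eq_one_le : #{j ∈ Icc 1 J | s j = 1} ≤ J :=
  (card_filter_le _ _).trans (by simp)

theorem ite_card_filter_eq_one_eq_sub (hs : ∀ k, s k = 0 ∨ s k = 1)
    (hmono : MonotoneOn s (Set.Iic (J + 1))) (h0 : s 0 = 0) (hJ : s (J + 1) = 1)
    {g : ℕ} (hg : g ≤ J) :
    (if #{j ∈ Icc 1 J | s j = 1} = g then 1 else 0) = s (J - g + 1) - s (J - g) := by
  have hN := card_filter_eq_one_le (J := J) (s := s)
  rw [eq_ite_card_filter_eq_one hs hmono h0 hJ (by omega),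
    eq_ite_card_filter_eq_one hs hmono h0 hJ (k := J - g) (by omega)]
  split_ifs <;> first | omega | norm_num

theorem sum_ite_card_filter_eq_one (hs : ∀ k, s k = 0 ∨ s k = 1)
    (hmono : MonotoneOn s (Set.Iic (J + 1))) (h0 : s 0 = 0) (hJ : s (J + 1) = 1)
    {z : ℕ} (hz : z ≤ J) :
    ∑ g ∈ Icc (J - z + 1) J, (if #{j ∈ Icc 1 J | s j = 1} = g then (1 : ℝ) else 0) = s z := by
  have hN := card_filter_eq_one_le (J := J) (s := s)
  rw [sum_ite_eq, eq_ite_card_filter_eq_one hs hmono h0 hJ (by omega)]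
  exact if_congr (by rw [mem_Icc]; omega) rfl rfl

end MonotoneBinary

theorem eq_mul_of_forall_mul_eq_mul_of_sum_eq {ι K : Type*} [Field K] {t : Finset ι}
    {a e : ι → K} {i : ι} {c : K} (hcross : ∀ j ∈ t, a i * e j = a j * e i)
    (hsum : ∑ j ∈ t, a j = c * ∑ j ∈ t, e j) (hne : ∑ j ∈ t, e j ≠ 0) :
    a i = c * e i := by
  refine mul_right_cancel₀ hne ?_
  calc a i * ∑ j ∈ t, e j = ∑ j ∈ t, a j * e i := by
        rw [mul_sum]; exact sum_congr rfl hcross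
    _ = c * e i * ∑ j ∈ t, e j := by rw [← sum_mul, hsum]; ring

theorem condExp_mul_ae_eq_integral_mul_of_indep {Ω : Type*} {m mf mg m0 : MeasurableSpace Ω}
    {μ : Measure Ω} [IsProbabilityMeasure μ] {f g : Ω → ℝ}
    (hmf : mf ≤ m0) (hmg : mg ≤ m0) (hm : m ≤ mg) (hind : Indep mf mg μ)
    (hf : StronglyMeasurable[mf] f) (hg : StronglyMeasurable[mg] g)
    (hfi : Integrable f μ) (hgi : Integrable g μ) :
    μ[f * g | m] =ᵐ[μ] fun ω => μ[f] * μ[g | m] ω := by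
  have hindepFun : ∀ {h : Ω → ℝ}, StronglyMeasurable[mg] h → IndepFun f h μ := fun hh =>
    (IndepFun_iff_Indep _ _ _).2 <| indep_of_indep_of_le_right
      (indep_of_indep_of_le_left hind hf.measurable.comap_le) hh.measurable.comap_le
  refine (ae_eq_condExp_of_forall_setIntegral_eq (hm.trans hmg)
    ((hindepFun hg).integrable_mul hfi hgi)
    (fun s _ _ => (integrable_condExp.const_mul _).integrableOn) (fun s hs _ => ?_)
    (stronglyMeasurable_condExp.const_mul _).aestronglyMeasurable).symm
  have hs' : MeasurableSet[mg] s := hm s hs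
  calc ∫ ω in s, μ[f] * μ[g | m] ω ∂μ
      = μ[f] * ∫ ω, s.indicator g ω ∂μ := by
        rw [integral_const_mul, setIntegral_condExp (hm.trans hmg) hgi hs,
          integral_indicator (hmg s hs')]
    _ = ∫ ω, f ω * s.indicator g ω ∂μ :=
        ((hindepFun (hg.indicator hs')).integral_mul_eq_mul_integral
          (hf.mono hmf).aestronglyMeasurable
          ((hg.mono hmg).indicator (hmg s hs')).aestronglyMeasurable).symm
    _ = ∫ ω in s, (f * g) ω ∂μ := by
        rw [← integral_indicator (hmg s hs')]
        congr 1 with ω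
        by_cases hω : ω ∈ s <;> simp [hω]

namespace TruncationByDeath

variable {Ω : Type*} {𝒳 : Type*} [MeasurableSpace Ω] [MeasurableSpace 𝒳]

-- `S_0 := 0` and `S_{J+1} := 1` mirror the conventions `p_0 = 0`, `p_{J+1} = 1` of `pscore`.
def Sext (J : ℕ) (S : ℕ → Ω → ℝ) (k : ℕ) : Ω → ℝ :=
  if k = 0 then fun _ => 0 else if k = J + 1 then fun _ => 1 else S k

variable {P : Measure Ω} {J : ℕ} {X : Ω → 𝒳} {Z : Ω → ℕ} {S Y : ℕ → Ω → ℝ}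

omit [MeasurableSpace Ω] in
theorem Sext_of_mem_Icc {k : ℕ} (hk : k ∈ Icc 1 J) : Sext J S k = S k := by
  rw [mem_Icc] at hk
  rw [Sext, if_neg (by omega), if_neg (by omega)]

theorem pscore_eq_condExp_Sext [IsFiniteMeasure P] (hX : Measurable X) (k : ℕ) :
    pscore P X S J k = P[Sext J S k | mX X] := by
  unfold pscore Sext
  split_ifs <;> first | rfl | exact (condExp_const hX.comap_le _).symm

omit [MeasurableSpace Ω] in
theorem indic_eq_indicator (z : ℕ) : indic Z z = (Z ⁻¹' {z}).indicator 1 := by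
  funext ω; by_cases h : Z ω = z <;> simp [indic, h]

theorem integral_indic [IsFiniteMeasure P] (hZ : Measurable Z) (z : ℕ) :
    ∫ ω, indic Z z ω ∂P = piZ P Z z := by
  rw [indic_eq_indicator, integral_indicator_one (hZ (measurableSet_singleton z))]
  rfl

theorem integrable_indic [IsFiniteMeasure P] (hZ : Measurable Z) (z : ℕ) :
    Integrable (indic Z z) P := by
  rw [indic_eq_indicator]
  exact (integrable_const 1).indicator (hZ (measurableSet_singleton z))

theorem Monotonicity.ae_monotoneOn_Sext (hmono : Monotonicity P J S)
    (hS01 : ∀ k ω, S k ω = 0 ∨ S k ω = 1) :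
    ∀ᵐ ω ∂P, MonotoneOn (fun k => Sext J S k ω) (Set.Iic (J + 1)) := by
  have hall : ∀ᵐ ω ∂P, ∀ k ∈ Icc 1 J, ∀ k' ∈ Icc 1 J, k' ≤ k → S k' ω ≤ S k ω := by
    simp only [Filter.eventually_all_finset, Filter.eventually_imp_distrib_left]
    exact hmono
  filter_upwards [hall] with ω hω
  intro a ha b hb hab
  have h0 : ∀ k, 0 ≤ S k ω := fun k => by rcases hS01 k ω with h | h <;> simp [h]
  have h1 : ∀ k, S k ω ≤ 1 := fun k => by rcases hS01 k ω with h | h <;> simp [h]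
  simp only [Set.mem_Iic] at ha hb
  show Sext J S a ω ≤ Sext J S b ω
  unfold Sext
  split_ifs <;> first
    | omega | linarith [h0 a, h0 b, h1 a, h1 b]
    | exact hω b (by simp; omega) a (by simp; omega) hab

namespace Setup

variable (hset : Setup P J X Z S Y)
include hset

theorem Sext_eq_zero_or_one (k : ℕ) (ω : Ω) : Sext J S k ω = 0 ∨ Sext J S k ω = 1 := by
  unfold Sext
  split_ifs <;> simp [hset.hS01]

theorem measurable_Sext (k : ℕ) : Measurable (Sext J S k) := by
  unfold Sext
  split_ifs <;> first | exact measurable_const | exact hset.hSm k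

theorem integrable_Sext [IsFiniteMeasure P] (k : ℕ) : Integrable (Sext J S k) P :=
  (integrable_const (1 : ℝ)).mono' (hset.measurable_Sext k).aestronglyMeasurable
    (ae_of_all _ fun ω => by rcases hset.Sext_eq_zero_or_one k ω with h | h <;> simp [h])

theorem measurable_indG (g : ℕ) : Measurable (indG J S g) :=
  measurable_const.indicator
    ((Finset.measurable_sum _ fun k _ => hset.hSm k) (measurableSet_singleton _))

theorem integrable_indG [IsFiniteMeasure P] (g : ℕ) : Integrable (indG J S g) P :=
  (integrable_const (1 : ℝ)).mono' (hset.measurable_indG g).aestronglyMeasurable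
    (ae_of_all _ fun ω => by unfold indG Set.indicator; split_ifs <;> simp)

theorem integrable_Y_mul_indG [IsFiniteMeasure P] (z g : ℕ) :
    Integrable (fun ω => Y z ω * indG J S g ω) P :=
  (hset.hYint z).mul_bdd (c := 1) (hset.measurable_indG g).aestronglyMeasurable
    (ae_of_all _ fun ω => by unfold indG Set.indicator; split_ifs <;> simp)

theorem integrable_Y_mul_S (z : ℕ) : Integrable (fun ω => Y z ω * S z ω) P :=
  (hset.hYint z).mul_bdd (c := 1) (hset.hSm z).aestronglyMeasurable
    (ae_of_all _ fun ω => by rcases hset.hS01 z ω with h | h <;> simp [h])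

theorem indG_eq_ite_card (g : ℕ) (ω : Ω) :
    indG J S g ω = if #{k ∈ Icc 1 J | Sext J S k ω = 1} = g then 1 else 0 := by
  have hG : Gsum J S ω = #{k ∈ Icc 1 J | Sext J S k ω = 1} := by
    rw [← sum_eq_card_filter_eq_one _ (hset.Sext_eq_zero_or_one · ω), Gsum]
    exact sum_congr rfl fun k hk => by rw [Sext_of_mem_Icc hk]
  simp only [indG, Set.indicator_apply, Set.mem_ofPred_eq, hG, Nat.cast_inj]

theorem Yobs_mul_Sobs_mul_indic (z : ℕ) :
    (fun ω => Yobs J Z Y ω * Sobs J Z S ω * indic Z z ω)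
      = fun ω => indic Z z ω * (Y z ω * S z ω) := by
  funext ω
  have hobs : ∀ V : ℕ → Ω → ℝ, ∑ k ∈ Icc 1 J, indic Z k ω * V k ω = V (Z ω) ω := fun V => by
    rw [sum_eq_single_of_mem (Z ω) (hset.hZr ω) fun k _ hk => by simp [indic, Ne.symm hk]]
    simp [indic]
  rw [Yobs, Sobs, hobs, hobs, indic]
  split_ifs with h
  · rw [h]; ring
  · ring

section Strata

variable (hmono : Monotonicity P J S)
include hmono

theorem indG_ae_eq_Sext_sub {g : ℕ} (hg : g ≤ J) :
    indG J S g =ᵐ[P] Sext J S (J - g + 1) - Sext J S (J - g) := by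
  filter_upwards [hmono.ae_monotoneOn_Sext hset.hS01] with ω hω
  rw [hset.indG_eq_ite_card, ite_card_filter_eq_one_eq_sub (hset.Sext_eq_zero_or_one · ω) hω
    (by simp [Sext]) (by simp [Sext]) hg]
  rfl

theorem sum_indG_ae_eq {z : ℕ} (hz : z ∈ Icc 1 J) :
    ∑ g ∈ Icc (J - z + 1) J, indG J S g =ᵐ[P] S z := by
  filter_upwards [hmono.ae_monotoneOn_Sext hset.hS01] with ω hω
  simp only [Finset.sum_apply, hset.indG_eq_ite_card]
  rw [sum_ite_card_filter_eq_one (hset.Sext_eq_zero_or_one · ω) hω (by simp [Sext])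
    (by simp [Sext]) (mem_Icc.1 hz).2, Sext_of_mem_Icc hz]

theorem eg_ae_eq_pscore_sub [IsFiniteMeasure P] {g : ℕ} (hg : g ≤ J) :
    eg P X J S g =ᵐ[P] fun ω => pscore P X S J (J - g + 1) ω - pscore P X S J (J - g) ω := by
  rw [pscore_eq_condExp_Sext hset.hX, pscore_eq_condExp_Sext hset.hX]
  exact (condExp_congr_ae (hset.indG_ae_eq_Sext_sub hmono hg)).trans
    (condExp_sub (hset.integrable_Sext _) (hset.integrable_Sext _) _)

theorem sum_eg_ae_eq_pscore [IsFiniteMeasure P] {z : ℕ} (hz : z ∈ Icc 1 J) :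
    ∑ g ∈ Icc (J - z + 1) J, eg P X J S g =ᵐ[P] pscore P X S J z := by
  rw [pscore_eq_condExp_Sext hset.hX, Sext_of_mem_Icc hz]
  exact (condExp_finsetSum (fun g _ => hset.integrable_indG g) _).symm.trans
    (condExp_congr_ae (hset.sum_indG_ae_eq hmono hz))

theorem sum_condExp_Y_mul_indG_ae_eq [IsFiniteMeasure P] {z : ℕ} (hz : z ∈ Icc 1 J) :
    ∑ g ∈ Icc (J - z + 1) J, P[fun ω => Y z ω * indG J S g ω | mX X]
      =ᵐ[P] P[fun ω => Y z ω * S z ω | mX X] := by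
  refine (condExp_finsetSum (fun g _ => hset.integrable_Y_mul_indG z g) _).symm.trans
    (condExp_congr_ae ?_)
  filter_upwards [hset.sum_indG_ae_eq hmono hz] with ω hω
  rw [← hω]
  simp only [Finset.sum_apply, mul_sum]

end Strata

end Setup

theorem Randomization.condExp_indic_mul [IsProbabilityMeasure P] (hset : Setup P J X Z S Y)
    (hrand : Randomization P J X Z S Y) (z : ℕ) :
    P[fun ω => indic Z z ω * (Y z ω * S z ω) | mX X]
      =ᵐ[P] fun ω => piZ P Z z * P[fun ω => Y z ω * S z ω | mX X] ω := by
  set W := fun ω => (X ω, fun k => S k ω, fun k => Y k ω)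
  have hW : Measurable W :=
    hset.hX.prodMk ((measurable_pi_lambda _ hset.hSm).prodMk (measurable_pi_lambda _ hset.hYm))
  have hYS : Measurable[MeasurableSpace.comap W inferInstance] fun ω => Y z ω * S z ω :=
    (((measurable_pi_apply z).comp (measurable_snd.comp measurable_snd)).mul
      ((measurable_pi_apply z).comp (measurable_fst.comp measurable_snd))).comp
      (comap_measurable W)
  rw [← integral_indic hset.hZ z]
  exact condExp_mul_ae_eq_integral_mul_of_indep hset.hZ.comap_le hW.comap_le
    (measurable_fst.comp (comap_measurable W)).comap_le ((IndepFun_iff_Indep _ _ _).1 hrand.1)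
    ((measurable_from_top (f := fun n : ℕ => if n = z then (1 : ℝ) else 0)).comp
      (comap_measurable Z)).stronglyMeasurable
    hYS.stronglyMeasurable (integrable_indic hset.hZ z) (hset.integrable_Y_mul_S z)

theorem condExp_Y_mul_S_ae_eq [IsProbabilityMeasure P] (hset : Setup P J X Z S Y)
    (hrand : Randomization P J X Z S Y) {z : ℕ} (hz : z ∈ Icc 1 J) {mz : Ω → ℝ}
    (hmz : (fun ω => mz ω * piZ P Z z * pscore P X S J z ω)
      =ᵐ[P] P[fun ω => Yobs J Z Y ω * Sobs J Z S ω * indic Z z ω | mX X]) :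
    P[fun ω => Y z ω * S z ω | mX X] =ᵐ[P] fun ω => mz ω * pscore P X S J z ω := by
  rw [hset.Yobs_mul_Sobs_mul_indic] at hmz
  filter_upwards [hmz, hrand.condExp_indic_mul hset z] with ω hm hπ
  refine mul_left_cancel₀ (hrand.2 z hz).ne' ?_
  rw [← hπ, ← hm]
  ring

theorem condExp_Y_mul_indG_ae_eq [IsProbabilityMeasure P] (hset : Setup P J X Z S Y)
    (hmono : Monotonicity P J S) (hPI : PrincipalIgnorability P J X S Y)
    (hpos : Positivity P J X S) {z g : ℕ} (hz : z ∈ Icc 1 J) (hg : g ∈ Icc (J - z + 1) J)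
    {mz : Ω → ℝ}
    (hYS : P[fun ω => Y z ω * S z ω | mX X] =ᵐ[P] fun ω => mz ω * pscore P X S J z ω) :
    P[fun ω => Y z ω * indG J S g ω | mX X] =ᵐ[P] fun ω => mz ω * eg P X J S g ω := by
  obtain ⟨c, hc, hpc⟩ := hpos
  have hcross : ∀ᵐ ω ∂P, ∀ g' ∈ Icc (J - z + 1) J,
      P[fun ω => Y z ω * indG J S g ω | mX X] ω * eg P X J S g' ω
        = P[fun ω => Y z ω * indG J S g' ω | mX X] ω * eg P X J S g ω :=
    (Filter.eventually_all_finset _).2 (hPI z hz g hg)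
  filter_upwards [hcross, hset.sum_eg_ae_eq_pscore hmono hz,
    hset.sum_condExp_Y_mul_indG_ae_eq hmono hz, hYS, hpc z hz] with ω hω he hY hm hcω
  rw [Finset.sum_apply] at he hY
  refine eq_mul_of_forall_mul_eq_mul_of_sum_eq
    (a := fun g' => P[fun ω => Y z ω * indG J S g' ω | mX X] ω)
    (e := fun g' => eg P X J S g' ω) hω ?_ ?_
  · rw [hY, hm, he]
  · rw [he]; linarith

/-- Under randomization, monotonicity, principal ignorability and
positivity, for every `z ∈ {1,…,J}` and `g ∈ {J−z+1,…,J}`: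
`E[Y_z·1(G=g)] = E[(p_{J−g+1}(X) − p_{J−g}(X)) · m_z(X)]`. -/
theorem statement7 (P : Measure Ω) [IsProbabilityMeasure P] (J : ℕ)
    (X : Ω → 𝒳) (Z : Ω → ℕ) (S Y : ℕ → Ω → ℝ)
    (hset : Setup P J X Z S Y)
    (hrand : Randomization P J X Z S Y)
    (hmono : Monotonicity P J S)
    (hPI : PrincipalIgnorability P J X S Y)
    (hpos : Positivity P J X S) :
    ∀ z ∈ Finset.Icc 1 J, ∀ g ∈ Finset.Icc (J - z + 1) J,
      ∀ mz : Ω → ℝ, Measurable[mX X] mz →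
      ((fun ω => mz ω * piZ P Z z * pscore P X S J z ω)
        =ᵐ[P] P[fun ω => Yobs J Z Y ω * Sobs J Z S ω * indic Z z ω | mX X]) →
      ∫ ω, Y z ω * indG J S g ω ∂P
        = ∫ ω, (pscore P X S J (J - g + 1) ω - pscore P X S J (J - g) ω) * mz ω ∂P := by
  intro z hz g hg mz _ hmz
  have hstratum := condExp_Y_mul_indG_ae_eq hset hmono hPI hpos hz hg
    (condExp_Y_mul_S_ae_eq hset hrand hz hmz)
  calc ∫ ω, Y z ω * indG J S g ω ∂P
      = ∫ ω, P[fun ω => Y z ω * indG J S g ω | mX X] ω ∂P :=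
        (integral_condExp hset.hX.comap_le).symm
    _ = _ := integral_congr_ae <| by
        filter_upwards [hstratum, hset.eg_ae_eq_pscore_sub hmono (mem_Icc.1 hg).2]
          with ω hω he
        rw [hω, he, mul_comm]

end TruncationByDeath
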